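/- Let X be a topological space and let A and B be nonempty closed subsets of X with B ⊆ A. Suppose that the pair (X, A) has the homotopy extension property and that B is a strong deformation retract of A. Then the pointed quotient spaces (X/A, [A]) and (X/B, [B]) are pointed homotopy equivalent, i.e., there exist continuous maps f : X/A → X/B and g : X/B → X/A with f([A]) = [B] and g([B]) = [A] such that g ∘ f is homotopic to the identity of X/A relative to {[A]} and f ∘ g is homotopic to the identity of X/B relative to {[B]}. -/

import Mathlib

open unitInterval

/-- The setoid on `X` identifying all points of `A` with one another. The quotient
`Quotient (collapseSetoid A)` is the space `X/A` obtained by collapsing `A` to a point. -/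
def collapseSetoid {X : Type*} (A : Set X) : Setoid X where
  r x y := x = y ∨ (x ∈ A ∧ y ∈ A)
  iseqv := by
    refine ⟨fun x => Or.inl rfl, ?_, ?_⟩
    · rintro x y (rfl | ⟨hx, hy⟩)
      · exact Or.inl rfl
      · exact Or.inr ⟨hy, hx⟩
    · rintro x y z (rfl | ⟨hx, hy⟩) (rfl | ⟨hy', hz⟩)
      · exact Or.inl rfl
      · exact Or.inr ⟨hy', hz⟩
      · exact Or.inr ⟨hx, hy⟩
      · exact Or.inr ⟨hx, hz⟩

/-- The pair `(X, A)` has the homotopy extension property: every continuous map defined on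
`(X × {0}) ∪ (A × I)` (with the subspace topology from `X × I`) into any space `Y` extends
to a continuous map on `X × I`. -/
def HasHEP.{u} {X : Type*} [TopologicalSpace X] (A : Set X) : Prop :=
  ∀ (Y : Type u) [TopologicalSpace Y]
    (F : ↥((Set.univ ×ˢ ({0} : Set I)) ∪ (A ×ˢ (Set.univ : Set I))) → Y),
    Continuous F →
    ∃ F' : X × I → Y, Continuous F' ∧
      ∀ p : ↥((Set.univ ×ˢ ({0} : Set I)) ∪ (A ×ˢ (Set.univ : Set I))), F' (p : X × I) = F p

/-- `B` is a strong deformation retract of `A`: there is a homotopy `H : A × I → A` with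
`H(a,0) = a`, `H(a,1) ∈ B`, and `H(b,t) = b` for all `b ∈ B`, `t ∈ I`. -/
def IsStrongDeformationRetract {X : Type*} [TopologicalSpace X] (A B : Set X) : Prop :=
  ∃ H : ↥A × I → ↥A, Continuous H ∧
    (∀ a : ↥A, H (a, 0) = a) ∧
    (∀ a : ↥A, ((H (a, 1) : ↥A) : X) ∈ B) ∧
    (∀ (b : ↥A) (t : I), (b : X) ∈ B → H (b, t) = b)

/-
Extending the strong deformation retraction of `A` onto `B` by the homotopy extension property
gives a homotopy `F` from `id_X` to a map `r` with `F_t(A) ⊆ A`, `r(A) ⊆ B` and `F_t = id` on `B`.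
Then `r` induces `f : X/A → X/B`, the identity induces `g : X/B → X/A`, both composites are induced
by `r`, and `F` descends to homotopies rel the base point on `X/A` and on `X/B`.
-/

open Set ContinuousMap

section Collapse

variable {X Y : Type*} {A : Set X} {B : Set Y}

open scoped Relator in
theorem collapseSetoid_rel_of_mapsTo {φ : X → Y} (h : MapsTo φ A B) :
    ((collapseSetoid A).r ⇒ (collapseSetoid B).r) φ φ := by
  rintro x y (rfl | ⟨hx, hy⟩)
  exacts [Or.inl rfl, Or.inr ⟨h hx, h hy⟩]

variable [TopologicalSpace X] [TopologicalSpace Y]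

def collapseMap (φ : C(X, Y)) (h : MapsTo φ A B) :
    C(Quotient (collapseSetoid A), Quotient (collapseSetoid B)) :=
  ⟨Quotient.map' φ (collapseSetoid_rel_of_mapsTo h), φ.continuous.quotient_map' _⟩

theorem collapseMap_mk_of_mem {φ : C(X, Y)} (h : MapsTo φ A B) {a : X} (ha : a ∈ A) {b : Y}
    (hb : b ∈ B) :
    collapseMap φ h (Quotient.mk _ a) = Quotient.mk _ b :=
  Quotient.sound (Or.inr ⟨h ha, hb⟩)

theorem collapseMap_id (h : MapsTo (ContinuousMap.id X) A A) :
    collapseMap (ContinuousMap.id X) h = ContinuousMap.id _ := by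
  ext q
  induction q using Quotient.inductionOn
  rfl

theorem collapseMap_comp {Z : Type*} [TopologicalSpace Z] {C : Set Z} {φ : C(X, Y)} {ψ : C(Y, Z)}
    (hφ : MapsTo φ A B) (hψ : MapsTo ψ B C) :
    (collapseMap ψ hψ).comp (collapseMap φ hφ) = collapseMap (ψ.comp φ) (hψ.comp hφ) := by
  ext q
  induction q using Quotient.inductionOn
  rfl

def ContinuousMap.Homotopy.collapse {φ₀ φ₁ : C(X, Y)} (F : Homotopy φ₀ φ₁)
    (hF : ∀ t, MapsTo (fun x => F (t, x)) A B) {a : X} (ha : a ∈ A) :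
    HomotopyRel (collapseMap φ₀ fun x hx => by simpa using hF 0 hx)
      (collapseMap φ₁ fun x hx => by simpa using hF 1 hx) {Quotient.mk _ a} where
  toFun p := Quotient.map' (fun x => F (p.1, x)) (collapseSetoid_rel_of_mapsTo (hF p.1)) p.2
  -- `I` is locally compact, so `I × X/A` carries the quotient topology of `I × X`.
  continuous_toFun := isQuotientMap_quotient_mk'.continuous_lift_prod_right
    (continuous_quotient_mk'.comp F.continuous)
  map_zero_left q := by
    induction q using Quotient.inductionOn with
    | h x => exact congrArg (Quotient.mk _) (F.apply_zero x)
  map_one_left q := by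
    induction q using Quotient.inductionOn with
    | h x => exact congrArg (Quotient.mk _) (F.apply_one x)
  prop' := by
    rintro t _ rfl
    exact Quotient.sound (Or.inr ⟨hF t ha, F.apply_zero a ▸ hF 0 ha⟩)

end Collapse

theorem HasHEP.exists_extension.{u, v, w} {X : Type v} {Y : Type w} [TopologicalSpace X]
    [TopologicalSpace Y] {A : Set X} (hA : HasHEP.{max u w} A) {F : X × I → Y}
    (hF : ContinuousOn F (univ ×ˢ {0} ∪ A ×ˢ univ)) :
    ∃ G : C(X × I, Y), EqOn G F (univ ×ˢ {0} ∪ A ×ˢ univ) := by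
  obtain ⟨G, hG, hGF⟩ := hA (ULift.{u} Y) (fun p => ULift.up (F p))
    (continuous_uliftUp.comp hF.domRestrict)
  exact ⟨⟨fun p => (G p).down, continuous_uliftDown.comp hG⟩,
    fun p hp => congrArg ULift.down (hGF ⟨p, hp⟩)⟩

theorem IsStrongDeformationRetract.exists_homotopyRel.{u, v} {X : Type v} [TopologicalSpace X]
    {A B : Set X} (hAB : IsStrongDeformationRetract A B) (hHEP : HasHEP.{max u v} A)
    (hA : IsClosed A) (hBA : B ⊆ A) :
    ∃ (r : C(X, X)) (F : HomotopyRel (ContinuousMap.id X) r B),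
      MapsTo r A B ∧ ∀ t, MapsTo (fun x => F (t, x)) A A := by
  classical
  obtain ⟨H, hH, hH0, hH1, hHB⟩ := hAB
  let F₀ : X × I → X := fun p => if h : p.1 ∈ A then H (⟨p.1, h⟩, p.2) else p.1
  have hF₀_zero : EqOn F₀ Prod.fst (univ ×ˢ {0}) := by
    rintro ⟨x, t⟩ ⟨-, rfl : t = 0⟩
    by_cases hx : x ∈ A
    · simp only [F₀, dif_pos hx, hH0]
    · simp only [F₀, dif_neg hx]
  have hF₀_A : ContinuousOn F₀ (A ×ˢ univ) := by
    rw [continuousOn_iff_continuous_domRestrict]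
    have : (A ×ˢ univ).domRestrict F₀ =
        fun q : ↥(A ×ˢ (univ : Set I)) => (H (⟨q.1.1, q.2.1⟩, q.1.2) : X) := by
      funext q
      simp only [domRestrict_apply, F₀, dif_pos q.2.1]
    rw [this]
    fun_prop
  obtain ⟨G, hG⟩ := hHEP.exists_extension <|
    (continuous_fst.continuousOn.congr hF₀_zero).union_of_isClosed hF₀_A
      (isClosed_univ.prod isClosed_singleton) (hA.prod isClosed_univ)
  have hGA : ∀ x (hx : x ∈ A) t, G (x, t) = H (⟨x, hx⟩, t) := fun x hx t =>
    (hG (Or.inr ⟨hx, trivial⟩)).trans (dif_pos hx)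
  have hG0 : ∀ x, G (x, 0) = x := fun x =>
    (hG (Or.inl ⟨trivial, rfl⟩ : (x, (0 : I)) ∈ _)).trans (hF₀_zero ⟨trivial, rfl⟩)
  refine ⟨⟨fun x => G (x, 1), by fun_prop⟩,
    { toFun := fun p => G (p.2, p.1)
      map_zero_left := hG0
      map_one_left := fun _ => rfl
      prop' := fun t x hx => by simp [hGA x (hBA hx), hHB ⟨x, hBA hx⟩ t hx] },
    fun x hx => hGA x hx 1 ▸ hH1 ⟨x, hx⟩, fun t x hx => hGA x hx t ▸ (H _).2⟩

theorem collapse_pointed_homotopy_equiv.{u, v} {X : Type v} [TopologicalSpace X]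
    (A B : Set X) (hAne : A.Nonempty) (hBne : B.Nonempty)
    (hAc : IsClosed A) (hBc : IsClosed B) (hBA : B ⊆ A)
    (hHEP : HasHEP.{max u v} A)
    (hSDR : IsStrongDeformationRetract A B)
    (a₀ : X) (ha₀ : a₀ ∈ A) (b₀ : X) (hb₀ : b₀ ∈ B) :
    ∃ (f : C(Quotient (collapseSetoid A), Quotient (collapseSetoid B)))
      (g : C(Quotient (collapseSetoid B), Quotient (collapseSetoid A))),
      f (Quotient.mk (collapseSetoid A) a₀) = Quotient.mk (collapseSetoid B) b₀ ∧
      g (Quotient.mk (collapseSetoid B) b₀) = Quotient.mk (collapseSetoid A) a₀ ∧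
      Nonempty ((g.comp f).HomotopyRel (ContinuousMap.id _)
        {Quotient.mk (collapseSetoid A) a₀}) ∧
      Nonempty ((f.comp g).HomotopyRel (ContinuousMap.id _)
        {Quotient.mk (collapseSetoid B) b₀}) := by
  obtain ⟨r, F, hrAB, hFA⟩ := hSDR.exists_homotopyRel hHEP hAc hBA
  have hFB : ∀ t, MapsTo (fun x => F (t, x)) B B := fun t x hx => by
    simpa [F.eq_fst t hx] using hx
  have hBA' : MapsTo (ContinuousMap.id X) B A := fun _ hx => hBA hx
  refine ⟨collapseMap r hrAB, collapseMap (.id X) hBA', collapseMap_mk_of_mem _ ha₀ hb₀,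
    collapseMap_mk_of_mem _ hb₀ ha₀, ?_, ?_⟩
  · simp only [collapseMap_comp, ContinuousMap.id_comp, ← collapseMap_id (mapsTo_id A)]
    exact ⟨(F.toHomotopy.collapse hFA ha₀).symm⟩
  · simp only [collapseMap_comp, ContinuousMap.comp_id, ← collapseMap_id (mapsTo_id B)]
    exact ⟨(F.toHomotopy.collapse hFB hb₀).symm⟩
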